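/- arXiv:1110.5608 — 4 statements merged into one kernel-verified Lean document; each statement's English description precedes it below -/
import Mathlib

section
/- Let a commutative square of abelian groups (p : A → B, q : A → C, f : B → D, g : C → D with f ∘ p = g ∘ q) be cartesian and co-cartesian. Suppose given decreasing filtrations (F^i B)_{i∈ℕ}, (F^i C)_{i∈ℕ}, (F^i D)_{i∈ℕ} by subgroups such that f(F^i B) + g(F^i C) = F^i D for all i, and define F^i A := { a ∈ A : p a ∈ F^i B and q a ∈ F^i C }. Then for every i ∈ ℕ the induced sequence of quotient groups 0 → A/F^i A → B/F^i B ⊕ C/F^i C → D/F^i D → 0 is exact, where the maps are those induced by a ↦ (p a, q a) and (b, c) ↦ f b − g c. -/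
/-!
STATEMENT 2: Given a cartesian and co-cartesian square of abelian groups
(p : A → B, q : A → C, f : B → D, g : C → D, f ∘ p = g ∘ q), decreasing
filtrations F^i B, F^i C, F^i D with f(F^i B) + g(F^i C) = F^i D, and
F^i A := {a | p a ∈ F^i B ∧ q a ∈ F^i C}, for every i the induced sequence
0 → A/F^i A → B/F^i B ⊕ C/F^i C → D/F^i D → 0 is exact.
-/

variable {A B C D : Type*} [AddCommGroup A] [AddCommGroup B] [AddCommGroup C] [AddCommGroup D]

/-- The map `a ↦ (p a, q a) : A → B ⊕ C`. -/
def squareFst (p : A →+ B) (q : A →+ C) : A →+ B × C := p.prod q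

/-- The map `(b, c) ↦ f b - g c : B ⊕ C → D`. -/
def squareSnd (f : B →+ D) (g : C →+ D) : B × C →+ D :=
  f.comp (AddMonoidHom.fst B C) - g.comp (AddMonoidHom.snd B C)

/-- The map `A/SA → B/SB ⊕ C/SC` induced by `a ↦ (p a, q a)`. -/
def quotPhi (p : A →+ B) (q : A →+ C) (SA : AddSubgroup A) (SB : AddSubgroup B)
    (SC : AddSubgroup C) (h1 : SA ≤ SB.comap p) (h2 : SA ≤ SC.comap q) :
    A ⧸ SA →+ (B ⧸ SB) × (C ⧸ SC) :=
  (QuotientAddGroup.map SA SB p h1).prod (QuotientAddGroup.map SA SC q h2)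

/-- The map `B/SB ⊕ C/SC → D/SD` induced by `(b, c) ↦ f b - g c`. -/
def quotPsi (f : B →+ D) (g : C →+ D) (SB : AddSubgroup B) (SC : AddSubgroup C)
    (SD : AddSubgroup D) (h1 : SB ≤ SD.comap f) (h2 : SC ≤ SD.comap g) :
    (B ⧸ SB) × (C ⧸ SC) →+ D ⧸ SD :=
  (QuotientAddGroup.map SB SD f h1).comp (AddMonoidHom.fst _ _) -
    (QuotientAddGroup.map SC SD g h2).comp (AddMonoidHom.snd _ _)

theorem quotient_filtration_square_exact
    (p : A →+ B) (q : A →+ C) (f : B →+ D) (g : C →+ D)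
    (hcomm : ∀ a, f (p a) = g (q a))
    (hinj : Function.Injective (squareFst p q))
    (hker : (squareFst p q).range = (squareSnd f g).ker)
    (hsurj : Function.Surjective (squareSnd f g))
    (FB : ℕ → AddSubgroup B) (FC : ℕ → AddSubgroup C) (FD : ℕ → AddSubgroup D)
    (hFB : ∀ i, FB (i + 1) ≤ FB i) (hFC : ∀ i, FC (i + 1) ≤ FC i)
    (hFD : ∀ i, FD (i + 1) ≤ FD i)
    (hsum : ∀ i, (FB i).map f ⊔ (FC i).map g = FD i) (i : ℕ) :
    Function.Injective
      (quotPhi p q ((FB i).comap p ⊓ (FC i).comap q) (FB i) (FC i)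
        inf_le_left inf_le_right) ∧
    (quotPhi p q ((FB i).comap p ⊓ (FC i).comap q) (FB i) (FC i)
        inf_le_left inf_le_right).range =
      (quotPsi f g (FB i) (FC i) (FD i)
        (AddSubgroup.map_le_iff_le_comap.mp (le_sup_left.trans (hsum i).le))
        (AddSubgroup.map_le_iff_le_comap.mp (le_sup_right.trans (hsum i).le))).ker ∧
    Function.Surjective
      (quotPsi f g (FB i) (FC i) (FD i)
        (AddSubgroup.map_le_iff_le_comap.mp (le_sup_left.trans (hsum i).le))
        (AddSubgroup.map_le_iff_le_comap.mp (le_sup_right.trans (hsum i).le))) := by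
  refine ⟨?_, ?_, ?_⟩
  · rw [injective_iff_map_eq_zero]
    intro x hx
    obtain ⟨a, rfl⟩ := QuotientAddGroup.mk_surjective x
    simp only [quotPhi, AddMonoidHom.prod_apply, Prod.mk_eq_zero] at hx
    obtain ⟨hb, hc⟩ := hx
    rw [QuotientAddGroup.map_mk, QuotientAddGroup.eq_zero_iff] at hb hc
    rw [QuotientAddGroup.eq_zero_iff]
    exact ⟨hb, hc⟩
  · have hfB : ∀ x ∈ FB i, f x ∈ FD i := fun x hx =>
      (hsum i) ▸ AddSubgroup.mem_sup_left ⟨x, hx, rfl⟩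
    have hgC : ∀ x ∈ FC i, g x ∈ FD i := fun x hx =>
      (hsum i) ▸ AddSubgroup.mem_sup_right ⟨x, hx, rfl⟩
    ext x
    obtain ⟨xb, xc⟩ := x
    obtain ⟨b, rfl⟩ := QuotientAddGroup.mk_surjective xb
    obtain ⟨c, rfl⟩ := QuotientAddGroup.mk_surjective xc
    simp only [AddMonoidHom.mem_range, AddMonoidHom.mem_ker, quotPhi, quotPsi,
      AddMonoidHom.sub_apply, AddMonoidHom.coe_comp, Function.comp_apply,
      AddMonoidHom.coe_fst, AddMonoidHom.coe_snd, QuotientAddGroup.map_mk]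
    constructor
    · rintro ⟨y, hy⟩
      obtain ⟨a, rfl⟩ := QuotientAddGroup.mk_surjective y
      simp only [AddMonoidHom.prod_apply, QuotientAddGroup.map_mk, Prod.mk.injEq] at hy
      have h1 : p a - b ∈ FB i := (QuotientAddGroup.eq_iff_sub_mem).mp hy.1
      have h2 : q a - c ∈ FC i := (QuotientAddGroup.eq_iff_sub_mem).mp hy.2
      rw [← QuotientAddGroup.mk_sub, QuotientAddGroup.eq_zero_iff]
      have : f b - g c = g (q a - c) - f (p a - b) := by
        rw [map_sub, map_sub, hcomm a]; abel
      rw [this]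
      exact sub_mem (hgC _ h2) (hfB _ h1)
    · intro h
      rw [sub_eq_zero, QuotientAddGroup.eq_iff_sub_mem] at h
      rw [← hsum i, AddSubgroup.mem_sup] at h
      obtain ⟨fb, ⟨b', hb', rfl⟩, gc, ⟨c', hc', rfl⟩, hfg⟩ := h
      have hkey : f (b - b') = g (c + c') := by
        have : f b - g c = f b' + g c' := hfg.symm
        rw [map_sub, map_add]
        linear_combination (norm := abel) this
      have hmem : (b - b', c + c') ∈ (squareSnd f g).ker := by
        simp [squareSnd, AddMonoidHom.mem_ker, hkey]
      rw [← hker] at hmem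
      obtain ⟨a, ha⟩ := hmem
      have ha1 : p a = b - b' := congrArg Prod.fst ha
      have ha2 : q a = c + c' := congrArg Prod.snd ha
      refine ⟨QuotientAddGroup.mk a, ?_⟩
      simp only [AddMonoidHom.prod_apply, QuotientAddGroup.map_mk, Prod.mk.injEq]
      constructor
      · rw [QuotientAddGroup.eq_iff_sub_mem, ha1]
        simpa using neg_mem hb'
      · rw [QuotientAddGroup.eq_iff_sub_mem, ha2]
        simpa using hc'
  · intro x
    obtain ⟨d, rfl⟩ := QuotientAddGroup.mk_surjective x
    obtain ⟨⟨b, c⟩, hbc⟩ := hsurj d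
    refine ⟨(QuotientAddGroup.mk b, QuotientAddGroup.mk c), ?_⟩
    simp only [quotPsi, AddMonoidHom.sub_apply, AddMonoidHom.coe_comp, Function.comp_apply,
      AddMonoidHom.coe_fst, AddMonoidHom.coe_snd, QuotientAddGroup.map_mk]
    rw [← QuotientAddGroup.mk_sub]
    exact congrArg QuotientAddGroup.mk (by simpa [squareSnd] using hbc)
end

section
/- Let a commutative square of abelian groups (p : A → B, q : A → C, f : B → D, g : C → D with f ∘ p = g ∘ q) be cartesian and co-cartesian. Suppose given complete decreasing filtrations (F^i B)_{i∈ℕ}, (F^i C)_{i∈ℕ}, (F^i D)_{i∈ℕ} by subgroups such that f(F^i B) + g(F^i C) = F^i D for all i, and define F^i A := { a ∈ A : p a ∈ F^i B and q a ∈ F^i C }. Then (F^i A)_{i∈ℕ} is a complete decreasing filtration on A. -/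
/-!
STATEMENT 3: Given a cartesian and co-cartesian square of abelian groups
(p : A → B, q : A → C, f : B → D, g : C → D, f ∘ p = g ∘ q), complete decreasing
filtrations F^i B, F^i C, F^i D with f(F^i B) + g(F^i C) = F^i D, and
F^i A := {a | p a ∈ F^i B ∧ q a ∈ F^i C}, the filtration (F^i A) is a complete
decreasing filtration on A.
-/

variable {A B C D : Type*} [AddCommGroup A] [AddCommGroup B] [AddCommGroup C] [AddCommGroup D]

/-- A filtration `F` of an abelian group `X` is complete if `X → lim X/F^i X` is an
isomorphism; equivalently: (1) `⋂ i, F^i X = 0`, and (2) every sequence `(x_i)` with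
`x_{i+1} - x_i ∈ F^i X` for all `i` admits `y` with `y - x_i ∈ F^i X` for all `i`. -/
def IsCompleteFiltration {X : Type*} [AddCommGroup X] (F : ℕ → AddSubgroup X) : Prop :=
  (⨅ i, F i) = ⊥ ∧
    ∀ x : ℕ → X, (∀ i, x (i + 1) - x i ∈ F i) → ∃ y : X, ∀ i, y - x i ∈ F i

theorem pullback_filtration_complete
    (p : A →+ B) (q : A →+ C) (f : B →+ D) (g : C →+ D)
    (hcomm : ∀ a, f (p a) = g (q a))
    (hinj : Function.Injective (squareFst p q))
    (hker : (squareFst p q).range = (squareSnd f g).ker)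
    (hsurj : Function.Surjective (squareSnd f g))
    (FB : ℕ → AddSubgroup B) (FC : ℕ → AddSubgroup C) (FD : ℕ → AddSubgroup D)
    (hFB : ∀ i, FB (i + 1) ≤ FB i) (hFC : ∀ i, FC (i + 1) ≤ FC i)
    (hFD : ∀ i, FD (i + 1) ≤ FD i)
    (hFBc : IsCompleteFiltration FB) (hFCc : IsCompleteFiltration FC)
    (hFDc : IsCompleteFiltration FD)
    (hsum : ∀ i, (FB i).map f ⊔ (FC i).map g = FD i) :
    (∀ i, (FB (i + 1)).comap p ⊓ (FC (i + 1)).comap q ≤ (FB i).comap p ⊓ (FC i).comap q) ∧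
    IsCompleteFiltration (fun i => (FB i).comap p ⊓ (FC i).comap q) := by
  refine ⟨fun i => inf_le_inf (AddSubgroup.comap_mono (hFB i)) (AddSubgroup.comap_mono (hFC i)),
    ?_, ?_⟩
  · rw [eq_bot_iff]
    intro a ha
    simp only [AddSubgroup.mem_iInf, AddSubgroup.mem_inf, AddSubgroup.mem_comap] at ha
    have hb : p a = 0 := by
      have : p a ∈ ⨅ i, FB i := AddSubgroup.mem_iInf.mpr fun i => (ha i).1
      rwa [hFBc.1, AddSubgroup.mem_bot] at this
    have hc : q a = 0 := by
      have : q a ∈ ⨅ i, FC i := AddSubgroup.mem_iInf.mpr fun i => (ha i).2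
      rwa [hFCc.1, AddSubgroup.mem_bot] at this
    have : squareFst p q a = squareFst p q 0 := by
      simp [squareFst, AddMonoidHom.prod_apply, hb, hc]
    simpa [AddSubgroup.mem_bot] using hinj this
  · intro x hx
    simp only [AddSubgroup.mem_inf, AddSubgroup.mem_comap] at hx
    obtain ⟨b, hb⟩ := hFBc.2 (fun i => p (x i)) (fun i => by
      simpa [map_sub] using (hx i).1)
    obtain ⟨c, hc⟩ := hFCc.2 (fun i => q (x i)) (fun i => by
      simpa [map_sub] using (hx i).2)
    have hd : f b - g c = 0 := by
      have hmem : ∀ i, f b - g c ∈ FD i := by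
        intro i
        have heq : f b - g c = f (b - p (x i)) - g (c - q (x i)) := by
          simp only [map_sub, hcomm]
          abel
        rw [heq, ← hsum i]
        exact AddSubgroup.sub_mem _
          (AddSubgroup.mem_sup_left ⟨_, hb i, rfl⟩)
          (AddSubgroup.mem_sup_right ⟨_, hc i, rfl⟩)
      have : f b - g c ∈ ⨅ i, FD i := AddSubgroup.mem_iInf.mpr hmem
      rwa [hFDc.1, AddSubgroup.mem_bot] at this
    have : (b, c) ∈ (squareSnd f g).ker := by
      simp [AddMonoidHom.mem_ker, squareSnd, hd]
    rw [← hker] at this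
    obtain ⟨y, hy⟩ := this
    have hyp : p y = b := congrArg Prod.fst hy
    have hyq : q y = c := congrArg Prod.snd hy
    refine ⟨y, fun i => ?_⟩
    simp only [AddSubgroup.mem_inf, AddSubgroup.mem_comap, map_sub, hyp, hyq]
    exact ⟨hb i, hc i⟩
end

section
/- Let a commutative square of abelian groups (p : A → B, q : A → C, f : B → D, g : C → D with f ∘ p = g ∘ q) be cartesian and co-cartesian. Suppose given decreasing filtrations (F^i B)_{i∈ℕ}, (F^i C)_{i∈ℕ}, (F^i D)_{i∈ℕ} by subgroups such that f(F^i B) + g(F^i C) = F^i D for all i, and define F^i A := { a ∈ A : p a ∈ F^i B and q a ∈ F^i C }. Then for every i ∈ ℕ the square of associated graded pieces is cartesian and co-cartesian; that is, the sequence 0 → F^i A/F^{i+1} A → F^i B/F^{i+1} B ⊕ F^i C/F^{i+1} C → F^i D/F^{i+1} D → 0 is exact, where the maps are those induced by a ↦ (p a, q a) and (b, c) ↦ f b − g c. -/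
/-!
STATEMENT 4: Given a cartesian and co-cartesian square of abelian groups
(p : A → B, q : A → C, f : B → D, g : C → D, f ∘ p = g ∘ q), decreasing
filtrations F^i B, F^i C, F^i D with f(F^i B) + g(F^i C) = F^i D, and
F^i A := {a | p a ∈ F^i B ∧ q a ∈ F^i C}, for every i the sequence of associated
graded pieces 0 → F^iA/F^{i+1}A → F^iB/F^{i+1}B ⊕ F^iC/F^{i+1}C → F^iD/F^{i+1}D → 0
is exact.
-/

variable {A B C D : Type*} [AddCommGroup A] [AddCommGroup B] [AddCommGroup C] [AddCommGroup D]

/-- The map `S/S' → T/T'` on graded pieces induced by a homomorphism `f : X → Y` with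
`f S ⊆ T` and `f S' ⊆ T'`. Here `S/S'` is formalized as `S ⧸ S'.addSubgroupOf S`. -/
def gradedHom {X Y : Type*} [AddCommGroup X] [AddCommGroup Y] (f : X →+ Y)
    (S S' : AddSubgroup X) (T T' : AddSubgroup Y)
    (h : S ≤ T.comap f) (h' : S' ≤ T'.comap f) :
    S ⧸ S'.addSubgroupOf S →+ T ⧸ T'.addSubgroupOf T :=
  QuotientAddGroup.map _ _ ((f.comp S.subtype).codRestrict T fun x => h x.2)
    (fun _x hx => h' hx)

lemma gradedHom_mk {X Y : Type*} [AddCommGroup X] [AddCommGroup Y] (f : X →+ Y)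
    (S S' : AddSubgroup X) (T T' : AddSubgroup Y)
    (h : S ≤ T.comap f) (h' : S' ≤ T'.comap f) (x : S) :
    gradedHom f S S' T T' h h' (QuotientAddGroup.mk x) = QuotientAddGroup.mk ⟨f x, h x.2⟩ :=
  rfl

theorem graded_filtration_square_exact
    (p : A →+ B) (q : A →+ C) (f : B →+ D) (g : C →+ D)
    (hcomm : ∀ a, f (p a) = g (q a))
    (hinj : Function.Injective (squareFst p q))
    (hker : (squareFst p q).range = (squareSnd f g).ker)
    (hsurj : Function.Surjective (squareSnd f g))
    (FB : ℕ → AddSubgroup B) (FC : ℕ → AddSubgroup C) (FD : ℕ → AddSubgroup D)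
    (hFB : ∀ i, FB (i + 1) ≤ FB i) (hFC : ∀ i, FC (i + 1) ≤ FC i)
    (hFD : ∀ i, FD (i + 1) ≤ FD i)
    (hsum : ∀ i, (FB i).map f ⊔ (FC i).map g = FD i) (i : ℕ) :
    Function.Injective
      ((gradedHom p ((FB i).comap p ⊓ (FC i).comap q)
          ((FB (i + 1)).comap p ⊓ (FC (i + 1)).comap q) (FB i) (FB (i + 1))
          inf_le_left inf_le_left).prod
        (gradedHom q ((FB i).comap p ⊓ (FC i).comap q)
          ((FB (i + 1)).comap p ⊓ (FC (i + 1)).comap q) (FC i) (FC (i + 1))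
          inf_le_right inf_le_right)) ∧
    ((gradedHom p ((FB i).comap p ⊓ (FC i).comap q)
          ((FB (i + 1)).comap p ⊓ (FC (i + 1)).comap q) (FB i) (FB (i + 1))
          inf_le_left inf_le_left).prod
        (gradedHom q ((FB i).comap p ⊓ (FC i).comap q)
          ((FB (i + 1)).comap p ⊓ (FC (i + 1)).comap q) (FC i) (FC (i + 1))
          inf_le_right inf_le_right)).range =
      ((gradedHom f (FB i) (FB (i + 1)) (FD i) (FD (i + 1))
          (AddSubgroup.map_le_iff_le_comap.mp (le_sup_left.trans (hsum i).le))
          (AddSubgroup.map_le_iff_le_comap.mp (le_sup_left.trans (hsum (i + 1)).le))).comp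
          (AddMonoidHom.fst (↥(FB i) ⧸ (FB (i + 1)).addSubgroupOf (FB i)) (↥(FC i) ⧸ (FC (i + 1)).addSubgroupOf (FC i))) -
        (gradedHom g (FC i) (FC (i + 1)) (FD i) (FD (i + 1))
          (AddSubgroup.map_le_iff_le_comap.mp (le_sup_right.trans (hsum i).le))
          (AddSubgroup.map_le_iff_le_comap.mp (le_sup_right.trans (hsum (i + 1)).le))).comp
          (AddMonoidHom.snd (↥(FB i) ⧸ (FB (i + 1)).addSubgroupOf (FB i)) (↥(FC i) ⧸ (FC (i + 1)).addSubgroupOf (FC i)))).ker ∧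
    Function.Surjective
      ((gradedHom f (FB i) (FB (i + 1)) (FD i) (FD (i + 1))
          (AddSubgroup.map_le_iff_le_comap.mp (le_sup_left.trans (hsum i).le))
          (AddSubgroup.map_le_iff_le_comap.mp (le_sup_left.trans (hsum (i + 1)).le))).comp
          (AddMonoidHom.fst (↥(FB i) ⧸ (FB (i + 1)).addSubgroupOf (FB i)) (↥(FC i) ⧸ (FC (i + 1)).addSubgroupOf (FC i))) -
        (gradedHom g (FC i) (FC (i + 1)) (FD i) (FD (i + 1))
          (AddSubgroup.map_le_iff_le_comap.mp (le_sup_right.trans (hsum i).le))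
          (AddSubgroup.map_le_iff_le_comap.mp (le_sup_right.trans (hsum (i + 1)).le))).comp
          (AddMonoidHom.snd (↥(FB i) ⧸ (FB (i + 1)).addSubgroupOf (FB i)) (↥(FC i) ⧸ (FC (i + 1)).addSubgroupOf (FC i)))) := by

  refine ⟨?_, ?_, ?_⟩
  · rw [injective_iff_map_eq_zero]
    intro x hx
    induction x using QuotientAddGroup.induction_on with
    | _ a =>
      simp only [AddMonoidHom.prod_apply, gradedHom_mk, Prod.ext_iff, Prod.fst_zero,
        Prod.snd_zero, QuotientAddGroup.eq_zero_iff, AddSubgroup.mem_addSubgroupOf] at hx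
      rw [QuotientAddGroup.eq_zero_iff, AddSubgroup.mem_addSubgroupOf]
      exact hx
  · ext y
    constructor
    · rintro ⟨x, rfl⟩
      induction x using QuotientAddGroup.induction_on with
      | _ a =>
        rw [AddMonoidHom.mem_ker, AddMonoidHom.prod_apply, AddMonoidHom.sub_apply,
          AddMonoidHom.comp_apply, AddMonoidHom.comp_apply]
        simp only [AddMonoidHom.coe_fst, AddMonoidHom.coe_snd, Prod.fst, Prod.snd, gradedHom_mk]
        rw [← QuotientAddGroup.mk_sub, QuotientAddGroup.eq_zero_iff,
          AddSubgroup.mem_addSubgroupOf]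
        show f (p a) - g (q a) ∈ FD (i + 1)
        rw [hcomm, sub_self]
        exact zero_mem _
    · intro hy
      obtain ⟨u, v⟩ := y
      induction u using QuotientAddGroup.induction_on with
      | _ b =>
      induction v using QuotientAddGroup.induction_on with
      | _ c =>
      rw [AddMonoidHom.mem_ker, AddMonoidHom.sub_apply, AddMonoidHom.comp_apply,
        AddMonoidHom.comp_apply] at hy
      simp only [AddMonoidHom.coe_fst, AddMonoidHom.coe_snd, Prod.fst, Prod.snd, gradedHom_mk] at hy
      rw [← QuotientAddGroup.mk_sub, QuotientAddGroup.eq_zero_iff,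
        AddSubgroup.mem_addSubgroupOf] at hy
      have hd : f ↑b - g ↑c ∈ (FB (i + 1)).map f ⊔ (FC (i + 1)).map g := by
        rw [hsum (i + 1)]; exact hy
      rw [AddSubgroup.mem_sup] at hd
      obtain ⟨y1, hy1, y2, hy2, hsum'⟩ := hd
      obtain ⟨b', hb', rfl⟩ := hy1
      obtain ⟨c', hc', rfl⟩ := hy2
      have h0 : squareSnd f g (↑b - b', ↑c + c') = 0 := by
        show f (↑b - b') - g (↑c + c') = 0
        have : f (↑b - b') - g (↑c + c') = (f ↑b - g ↑c) - (f b' + g c') := by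
          rw [map_sub, map_add]; abel
        rw [this, ← hsum', sub_self]
      have hmem : (↑b - b', ↑c + c') ∈ (squareFst p q).range := by
        rw [hker]; exact h0
      obtain ⟨a, ha⟩ := hmem
      have hpa : p a = ↑b - b' := congrArg Prod.fst ha
      have hqa : q a = ↑c + c' := congrArg Prod.snd ha
      have haF : a ∈ (FB i).comap p ⊓ (FC i).comap q := by
        constructor
        · show p a ∈ FB i
          rw [hpa]; exact sub_mem b.2 (hFB i hb')
        · show q a ∈ FC i
          rw [hqa]; exact add_mem c.2 (hFC i hc')
      refine ⟨QuotientAddGroup.mk ⟨a, haF⟩, ?_⟩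
      rw [AddMonoidHom.prod_apply, gradedHom_mk, gradedHom_mk, Prod.mk.injEq]
      constructor
      · rw [QuotientAddGroup.eq, AddSubgroup.mem_addSubgroupOf]
        show -(p a) + ↑b ∈ FB (i + 1)
        rw [hpa]
        have : -(↑b - b') + ↑b = b' := by abel
        rw [this]; exact hb'
      · rw [QuotientAddGroup.eq, AddSubgroup.mem_addSubgroupOf]
        show -(q a) + ↑c ∈ FC (i + 1)
        rw [hqa]
        have : -(↑c + c') + ↑c = -c' := by abel
        rw [this]; exact neg_mem hc'
  · intro y
    induction y using QuotientAddGroup.induction_on with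
    | _ d =>
      have hd : (d : D) ∈ (FB i).map f ⊔ (FC i).map g := by rw [hsum i]; exact d.2
      rw [AddSubgroup.mem_sup] at hd
      obtain ⟨y1, hy1, y2, hy2, hsum'⟩ := hd
      obtain ⟨b, hb, rfl⟩ := hy1
      obtain ⟨c, hc, rfl⟩ := hy2
      refine ⟨(QuotientAddGroup.mk ⟨b, hb⟩, QuotientAddGroup.mk ⟨-c, neg_mem hc⟩), ?_⟩
      rw [AddMonoidHom.sub_apply, AddMonoidHom.comp_apply, AddMonoidHom.comp_apply]
      simp only [AddMonoidHom.coe_fst, AddMonoidHom.coe_snd, Prod.fst, Prod.snd, gradedHom_mk]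
      rw [← QuotientAddGroup.mk_sub]
      congr 1
      ext
      show f b - g (-c) = ↑d
      rw [map_neg, sub_neg_eq_add, hsum']
end

section
/- Fix a field k and integers s, p with s ≥ 1. Let ψ : E → E'' be a morphism of homologically graded spectral sequences of k-vector spaces starting at page s, such that ψ^s_{m,q} : E^s_{m,q} → E''^s_{m,q} is an isomorphism for all m > p and all q, and E''^s_{m,q} = 0 for all m ≤ p and all q. For an integer i ≥ s and a bidegree (m,q) with m > p, let Coim(d^i_c)_{m,q} denote the quotient space E^i_{m,q} / ker(d^i : E^i_{m,q} → E^i_{m−i, q+i−1}) if m − i ≤ p, and the zero space if m − i > p (i.e., the coimage in bidegree (m,q) of the restriction of the differential of E regarded as a map from filtration degrees > p to filtration degrees ≤ p). Then for every r ≥ s, every m > p and every q, the map ψ^r_{m,q} : E^r_{m,q} → E''^r_{m,q} is injective and there is an isomorphism of k-vector spaces E''^r_{m,q} ≅ E^r_{m,q} ⊕ (⊕_{s ≤ i < r} Coim(d^i_c)_{m,q}) under which ψ^r_{m,q} corresponds to the inclusion of the first summand. -/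
universe u

/-- A homologically graded spectral sequence of `k`-vector spaces starting at page `s`:
`k`-vector spaces `E^r_{m,q}` for `r ≥ s` (here given for all `r ∈ ℤ`; only the pages
`r ≥ s` are constrained), differentials `d^r : E^r_{m,q} → E^r_{m-r,q+r-1}` (formalized,
as for `HomologicalComplex`, as maps `E^r_{m,q} → E^r_{m',q'}` vanishing unless
`m' = m - r` and `q' = q + r - 1`) with `d^r ∘ d^r = 0`, and specified isomorphisms
`E^{r+1}_{m,q} ≅ ker(d^r : E^r_{m,q} → E^r_{m-r,q+r-1}) / im(d^r : E^r_{m+r,q-r+1} → E^r_{m,q})`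
for `r ≥ s`. -/
structure SpectralSequence (k : Type*) [Field k] (s : ℤ) where
  /-- the pages -/
  E : ℤ → ℤ → ℤ → Type u
  [acg : ∀ r m q : ℤ, AddCommGroup (E r m q)]
  [mod : ∀ r m q : ℤ, Module k (E r m q)]
  /-- the differentials -/
  d : ∀ r m q m' q' : ℤ, E r m q →ₗ[k] E r m' q'
  d_shape : ∀ r m q m' q' : ℤ, ¬(m' = m - r ∧ q' = q + r - 1) → d r m q m' q' = 0
  d_comp_d : ∀ r m q m' q' m'' q'' : ℤ, (d r m' q' m'' q'').comp (d r m q m' q') = 0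
  /-- the specified isomorphisms of each page `r + 1` (for `r ≥ s`) with the homology
  of page `r` -/
  iso : ∀ (r m q : ℤ), s ≤ r →
    E (r + 1) m q ≃ₗ[k]
      (LinearMap.ker (d r m q (m - r) (q + r - 1)) ⧸
        Submodule.comap (LinearMap.ker (d r m q (m - r) (q + r - 1))).subtype
          (LinearMap.range (d r (m + r) (q - r + 1) m q)))

attribute [instance] SpectralSequence.acg SpectralSequence.mod

/-- A morphism of spectral sequences: `k`-linear maps on each page commuting with the
differentials and compatible, via the specified isomorphisms, with the maps induced on
homology. -/
structure SpectralSequenceHom {k : Type*} [Field k] {s : ℤ}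
    (E' E : SpectralSequence.{u} k s) where
  /-- the maps on each page -/
  φ : ∀ r m q : ℤ, E'.E r m q →ₗ[k] E.E r m q
  comm : ∀ r m q m' q' : ℤ,
    (E.d r m q m' q').comp (φ r m q) = (φ r m' q').comp (E'.d r m q m' q')
  compat : ∀ (r m q : ℤ) (h : s ≤ r)
    (x : LinearMap.ker (E'.d r m q (m - r) (q + r - 1))),
    (E.iso r m q h) (φ (r + 1) m q ((E'.iso r m q h).symm (Submodule.Quotient.mk x))) =
      Submodule.Quotient.mk
        ⟨φ r m q x.1, by
          have h1 := LinearMap.congr_fun (comm r m q (m - r) (q + r - 1)) x.1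
          simp only [LinearMap.coe_comp, Function.comp_apply] at h1
          have h2 : (E'.d r m q (m - r) (q + r - 1)) x.1 = 0 := x.2
          rw [LinearMap.mem_ker, h1, h2, map_zero]⟩

/-- `Coim(d^i_c)_{m,q}`: the coimage in bidegree `(m,q)` of the restriction of the
differential `d^i` of `E` regarded as a map from filtration degrees `> p` to filtration
degrees `≤ p`, i.e. `E^i_{m,q} / ker(d^i : E^i_{m,q} → E^i_{m-i,q+i-1})` if `m - i ≤ p`
and the zero space otherwise. -/
abbrev coimDc {k : Type*} [Field k] {s : ℤ} (E : SpectralSequence.{u} k s) (p : ℤ)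
    (i m q : ℤ) : Type u :=
  E.E i m q ⧸
    (if m - i ≤ p then LinearMap.ker (E.d i m q (m - i) (q + i - 1))
     else (⊤ : Submodule k (E.E i m q)))

/-!
Induction on the page `r`. Suppose `ψ^r` is injective in filtration degrees `> p` with cokernel
`∏_{s ≤ i < r} Coim(d^i_c)`. These factors vanish once `m ≥ p + r`, so there `ψ^r` is bijective;
in particular `ψ^r` is onto the source `E''^r_{m+r,*}` of the differential entering `(m,q)`, and
the map induced on homology, i.e. `ψ^{r+1}_{m,q}`, stays injective.
If `m - r > p`, the differential leaving `(m,q)` also lands where `ψ^r` is injective, and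
`ψ^{r+1}_{m,q}` is moreover surjective. If `m - r ≤ p`, the target of the outgoing differential
of `E''` is zero, so `E''^{r+1}_{m,q} = E''^r_{m,q} / ψ(im d^r)` while
`E^{r+1}_{m,q} = ker d^r / im d^r`: the cokernel gains exactly the factor
`E^r_{m,q} / ker d^r = Coim(d^r_c)_{m,q}`. Over a field an injection splits off its cokernel.
-/

section LinearAlgebra

variable {k : Type*} [DivisionRing k] {V V'' W : Type*}
  [AddCommGroup V] [Module k V] [AddCommGroup V''] [Module k V'']
  [AddCommGroup W] [Module k W]

theorem LinearMap.exists_linearEquiv_prod_of_injective {f : V →ₗ[k] V''}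
    (hf : Function.Injective f) (g : (V'' ⧸ LinearMap.range f) ≃ₗ[k] W) :
    ∃ e : V'' ≃ₗ[k] V × W, ∀ x, e (f x) = (x, 0) := by
  obtain ⟨C, hC⟩ := (LinearMap.range f).exists_isCompl
  refine ⟨(Submodule.prodEquivOfIsCompl _ C hC).symm ≪≫ₗ
    (LinearEquiv.ofInjective f hf).symm.prodCongr
      ((Submodule.quotientEquivOfIsCompl _ C hC).symm ≪≫ₗ g), fun x => ?_⟩
  have hx : f x = ((LinearEquiv.ofInjective f hf x : LinearMap.range f) : V'') := rfl
  rw [LinearEquiv.trans_apply, hx, Submodule.prodEquivOfIsCompl_symm_apply_left]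
  simp

theorem LinearMap.nonempty_quotient_map_equiv_prod {f : V →ₗ[k] V''}
    (hf : Function.Injective f) (K : Submodule k V) :
    Nonempty ((V'' ⧸ K.map f) ≃ₗ[k] (V ⧸ K) × (V'' ⧸ LinearMap.range f)) := by
  set fbar := K.mapQ (K.map f) f (Submodule.le_comap_map f K)
  have hfbar : Function.Injective fbar := by
    rw [← LinearMap.ker_eq_bot, Submodule.ker_mapQ, Submodule.comap_map_eq_of_injective hf,
      Submodule.mkQ_map_self]
  have hrange : LinearMap.range fbar = (LinearMap.range f).map (K.map f).mkQ :=
    Submodule.range_mapQ _ _ _ _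
  obtain ⟨e, -⟩ := LinearMap.exists_linearEquiv_prod_of_injective hfbar
    (Submodule.quotEquivOfEq _ _ hrange ≪≫ₗ Submodule.quotientQuotientEquivQuotient _ _
      LinearMap.map_le_range)
  exact ⟨e⟩

end LinearAlgebra

section Homology

variable {R : Type*} [Ring R] {A V B A'' V'' B'' : Type*}
  [AddCommGroup A] [Module R A] [AddCommGroup V] [Module R V] [AddCommGroup B] [Module R B]
  [AddCommGroup A''] [Module R A''] [AddCommGroup V''] [Module R V'']
  [AddCommGroup B''] [Module R B'']

abbrev Homology (din : A →ₗ[R] V) (dout : V →ₗ[R] B) : Type _ :=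
  LinearMap.ker dout ⧸ Submodule.comap (LinearMap.ker dout).subtype (LinearMap.range din)

variable {din : A →ₗ[R] V} {dout : V →ₗ[R] B} {din'' : A'' →ₗ[R] V''} {dout'' : V'' →ₗ[R] B''}
  {fA : A →ₗ[R] A''} {fV : V →ₗ[R] V''} {fB : B →ₗ[R] B''}

namespace Homology

def kerMap (hout : dout''.comp fV = fB.comp dout) :
    LinearMap.ker dout →ₗ[R] LinearMap.ker dout'' :=
  fV.restrict fun x (hx : dout x = 0) => by
    change dout'' (fV x) = 0
    rw [← LinearMap.comp_apply, hout, LinearMap.comp_apply, hx, map_zero]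

@[simp]
theorem kerMap_coe (hout : dout''.comp fV = fB.comp dout) (x : LinearMap.ker dout) :
    (kerMap hout x : V'') = fV x :=
  rfl

def map (hin : din''.comp fA = fV.comp din) (hout : dout''.comp fV = fB.comp dout) :
    Homology din dout →ₗ[R] Homology din'' dout'' :=
  Submodule.mapQ _ _ (kerMap hout) fun x ⟨a, ha⟩ =>
    ⟨fA a, by rw [← LinearMap.comp_apply, hin, LinearMap.comp_apply, ha]; rfl⟩

theorem map_injective (hin : din''.comp fA = fV.comp din)
    (hout : dout''.comp fV = fB.comp dout) (hfV : Function.Injective fV)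
    (hfA : Function.Surjective fA) : Function.Injective (map hin hout) := by
  rw [← LinearMap.ker_eq_bot, map, Submodule.ker_mapQ, ← LinearMap.le_ker_iff_map,
    Submodule.ker_mkQ]
  rintro x ⟨a'', ha''⟩
  obtain ⟨a, rfl⟩ := hfA a''
  refine ⟨a, hfV ?_⟩
  rw [← LinearMap.comp_apply, ← hin, LinearMap.comp_apply, ha'']
  rfl

theorem map_surjective (hin : din''.comp fA = fV.comp din)
    (hout : dout''.comp fV = fB.comp dout) (hfV : Function.Surjective fV)
    (hfB : Function.Injective fB) : Function.Surjective (map hin hout) := by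
  have hker : Function.Surjective (kerMap hout) := by
    rintro ⟨y, hy⟩
    obtain ⟨x, rfl⟩ := hfV y
    refine ⟨⟨x, hfB ?_⟩, rfl⟩
    rw [← LinearMap.comp_apply, ← hout, map_zero]
    exact hy
  rw [← LinearMap.range_eq_top, map, Submodule.range_mapQ, LinearMap.range_eq_top.mpr hker,
    Submodule.map_top, Submodule.range_mkQ]

def cokernelMapEquiv (hin : din''.comp fA = fV.comp din)
    (hout : dout''.comp fV = fB.comp dout) (hfA : Function.Surjective fA)
    (hd : dout.comp din = 0) :
    (Homology din'' dout'' ⧸ LinearMap.range (map hin hout)) ≃ₗ[R]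
      (LinearMap.ker dout'' ⧸ LinearMap.range (kerMap hout)) :=
  Submodule.quotEquivOfEq _ _ (Submodule.range_mapQ _ _ _ _) ≪≫ₗ
    Submodule.quotientQuotientEquivQuotient _ _ fun y ⟨a'', ha''⟩ => by
      obtain ⟨a, rfl⟩ := hfA a''
      refine ⟨⟨din a, LinearMap.congr_fun hd a⟩, Subtype.ext ?_⟩
      rw [kerMap_coe, ← LinearMap.comp_apply, ← hin]
      exact ha''

def kerMapCokernelEquivOfEqZero (hout : dout''.comp fV = fB.comp dout) (hzero : dout'' = 0) :
    (LinearMap.ker dout'' ⧸ LinearMap.range (kerMap hout)) ≃ₗ[R]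
      (V'' ⧸ (LinearMap.ker dout).map fV) :=
  Submodule.Quotient.equiv _ _ (LinearEquiv.ofTop _ (by rw [hzero, LinearMap.ker_zero])) <| by
    ext y
    constructor
    · rintro ⟨_, ⟨x, rfl⟩, rfl⟩
      exact ⟨x, x.2, rfl⟩
    · rintro ⟨x, hx, rfl⟩
      exact ⟨_, ⟨⟨x, hx⟩, rfl⟩, rfl⟩

end Homology

end Homology

section Conjugation

variable {R : Type*} [Ring R] {V V'' W W'' : Type*}
  [AddCommGroup V] [Module R V] [AddCommGroup V''] [Module R V'']
  [AddCommGroup W] [Module R W] [AddCommGroup W''] [Module R W'']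

def LinearMap.cokernelEquivOfComm {f : V →ₗ[R] V''} {g : W →ₗ[R] W''} (e : V ≃ₗ[R] W)
    (e'' : V'' ≃ₗ[R] W'') (h : e''.toLinearMap ∘ₗ f = g ∘ₗ e.toLinearMap) :
    (V'' ⧸ LinearMap.range f) ≃ₗ[R] (W'' ⧸ LinearMap.range g) :=
  Submodule.Quotient.equiv _ _ e'' <| by
    rw [← LinearMap.range_comp, h, LinearEquiv.range_comp]

end Conjugation

noncomputable def Finset.piIcoSuccEquiv (R : Type*) [Semiring R] (W : ℤ → Type*)
    [∀ i, AddCommMonoid (W i)]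
    [∀ i, Module R (W i)] {s r : ℤ} (hsr : s ≤ r) :
    ((i : (Finset.Ico s (r + 1) : Finset ℤ)) → W i.1) ≃ₗ[R]
      W r × ((i : (Finset.Ico s r : Finset ℤ)) → W i.1) :=
  (LinearEquiv.piCongrLeft R (fun i : (Finset.Ico s (r + 1) : Finset ℤ) => W i.1)
    ((Finset.subtypeInsertEquivOption Finset.right_notMem_Ico).symm.trans
      (Equiv.subtypeEquivRight fun _ => by rw [Finset.insert_Ico_right_eq_Ico_add_one hsr]))).symm ≪≫ₗ
    LinearEquiv.piOptionEquivProd R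

namespace SpectralSequence

variable {k : Type*} [Field k] {s : ℤ} (E : SpectralSequence.{u} k s)

theorem subsingleton_of_le {m q : ℤ} (h : Subsingleton (E.E s m q)) {r : ℤ} (hr : s ≤ r) :
    Subsingleton (E.E r m q) := by
  induction r, hr using Int.leInduction with
  | base => exact h
  | succ r hr ih => exact (E.iso r m q hr).toEquiv.subsingleton

end SpectralSequence

theorem subsingleton_coimDc {k : Type*} [Field k] {s : ℤ} (E : SpectralSequence.{u} k s)
    {p i m : ℤ} (q : ℤ) (h : p < m - i) : Subsingleton (coimDc E p i m q) :=
  Submodule.Quotient.subsingleton_iff.mpr (if_neg (not_le.mpr h))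

namespace SpectralSequenceHom

variable {k : Type*} [Field k] {s : ℤ} {E E'' : SpectralSequence.{u} k s}
  (ψ : SpectralSequenceHom E E'')

abbrev homologyMap (r m q : ℤ) :
    Homology (E.d r (m + r) (q - r + 1) m q) (E.d r m q (m - r) (q + r - 1)) →ₗ[k]
      Homology (E''.d r (m + r) (q - r + 1) m q) (E''.d r m q (m - r) (q + r - 1)) :=
  Homology.map (ψ.comm r (m + r) (q - r + 1) m q) (ψ.comm r m q (m - r) (q + r - 1))

theorem iso_comp_φ_succ {r : ℤ} (hr : s ≤ r) (m q : ℤ) :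
    (E''.iso r m q hr).toLinearMap ∘ₗ ψ.φ (r + 1) m q =
      ψ.homologyMap r m q ∘ₗ (E.iso r m q hr).toLinearMap := by
  refine LinearMap.ext fun z => ?_
  obtain ⟨x, hx⟩ := Submodule.Quotient.mk_surjective _ (E.iso r m q hr z)
  obtain rfl : z = (E.iso r m q hr).symm (Submodule.Quotient.mk x) :=
    (E.iso r m q hr).eq_symm_apply.mpr hx.symm
  simp only [LinearMap.comp_apply, LinearEquiv.coe_coe, ψ.compat, LinearEquiv.apply_symm_apply]
  rfl

def CokernelIsCoimAbove (p r : ℤ) : Prop :=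
  ∀ m q : ℤ, p < m → Function.Injective (ψ.φ r m q) ∧
    Nonempty ((E''.E r m q ⧸ LinearMap.range (ψ.φ r m q)) ≃ₗ[k]
      ((i : (Finset.Ico s r : Finset ℤ)) → coimDc E p i.1 m q))

variable {ψ} {p : ℤ}

theorem cokernelIsCoimAbove_start (hiso : ∀ m q : ℤ, p < m → Function.Bijective (ψ.φ s m q)) :
    ψ.CokernelIsCoimAbove p s := fun m q hm => by
  have : Subsingleton (E''.E s m q ⧸ LinearMap.range (ψ.φ s m q)) :=
    Submodule.Quotient.subsingleton_iff.mpr (LinearMap.range_eq_top.mpr (hiso m q hm).2)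
  have : IsEmpty (Finset.Ico s s : Finset ℤ) := Finset.isEmpty_coe_sort.mpr (Finset.Ico_self s)
  exact ⟨(hiso m q hm).1, ⟨LinearEquiv.ofSubsingleton _ _⟩⟩

theorem CokernelIsCoimAbove.surjective {r : ℤ} (h : ψ.CokernelIsCoimAbove p r) {m : ℤ} (q : ℤ)
    (hm : p < m) (hmr : p + r ≤ m) : Function.Surjective (ψ.φ r m q) := by
  obtain ⟨-, ⟨e⟩⟩ := h m q hm
  have : ∀ i : (Finset.Ico s r : Finset ℤ), Subsingleton (coimDc E p i.1 m q) := fun i =>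
    subsingleton_coimDc E q (by have := (Finset.mem_Ico.mp i.2).2; omega)
  have := e.toEquiv.subsingleton
  exact LinearMap.range_eq_top.mp (Submodule.Quotient.subsingleton_iff.mp this)

theorem CokernelIsCoimAbove.succ {r : ℤ} (h : ψ.CokernelIsCoimAbove p r) (hr₀ : 0 ≤ r)
    (hr : s ≤ r) (hlow : ∀ m q : ℤ, m ≤ p → Subsingleton (E''.E r m q)) :
    ψ.CokernelIsCoimAbove p (r + 1) := fun m q hm => by
  obtain ⟨hinj, ⟨ecoker⟩⟩ := h m q hm
  have hin : Function.Surjective (ψ.φ r (m + r) (q - r + 1)) := h.surjective _ (by omega) (by omega)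
  have hconj := ψ.iso_comp_φ_succ hr m q
  have hconj' : E''.iso r m q hr ∘ ψ.φ (r + 1) m q = ψ.homologyMap r m q ∘ E.iso r m q hr :=
    congrArg DFunLike.coe hconj
  refine ⟨(EquivLike.comp_injective _ (E''.iso r m q hr)).mp ?_, ?_⟩
  · rw [hconj']
    exact (Homology.map_injective _ _ hinj hin).comp (E.iso r m q hr).injective
  by_cases hcase : m - r ≤ p
  · have hout : E''.d r m q (m - r) (q + r - 1) = 0 := by
      have := hlow (m - r) (q + r - 1) hcase
      ext x; exact Subsingleton.elim _ _
    obtain ⟨esplit⟩ := LinearMap.nonempty_quotient_map_equiv_prod hinj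
      (LinearMap.ker (E.d r m q (m - r) (q + r - 1)))
    exact ⟨LinearMap.cokernelEquivOfComm _ _ hconj ≪≫ₗ
      Homology.cokernelMapEquiv _ _ hin (E.d_comp_d _ _ _ _ _ _ _) ≪≫ₗ
      Homology.kerMapCokernelEquivOfEqZero _ hout ≪≫ₗ esplit ≪≫ₗ
      (Submodule.quotEquivOfEq _ _ (if_pos hcase).symm).prodCongr ecoker ≪≫ₗ
      (Finset.piIcoSuccEquiv k (fun i => coimDc E p i m q) hr).symm⟩
  · have hsurj : Function.Surjective (ψ.φ (r + 1) m q) := by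
      refine (EquivLike.comp_surjective _ (E''.iso r m q hr)).mp ?_
      rw [hconj']
      exact (Homology.map_surjective _ _ (h.surjective q hm (by omega))
          (h (m - r) (q + r - 1) (by omega)).1).comp (E.iso r m q hr).surjective
    have : Subsingleton (E''.E (r + 1) m q ⧸ LinearMap.range (ψ.φ (r + 1) m q)) :=
      Submodule.Quotient.subsingleton_iff.mpr (LinearMap.range_eq_top.mpr hsurj)
    have : ∀ i : (Finset.Ico s (r + 1) : Finset ℤ), Subsingleton (coimDc E p i.1 m q) :=
      fun i => subsingleton_coimDc E q (by have := (Finset.mem_Ico.mp i.2).2; omega)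
    exact ⟨LinearEquiv.ofSubsingleton _ _⟩

theorem cokernelIsCoimAbove (hs : 0 ≤ s)
    (hiso : ∀ m q : ℤ, p < m → Function.Bijective (ψ.φ s m q))
    (hzero : ∀ m q : ℤ, m ≤ p → Subsingleton (E''.E s m q)) {r : ℤ} (hr : s ≤ r) :
    ψ.CokernelIsCoimAbove p r := by
  induction r, hr using Int.leInduction with
  | base => exact cokernelIsCoimAbove_start hiso
  | succ r hr ih =>
    exact ih.succ (by omega) hr fun m q hm => E''.subsingleton_of_le (hzero m q hm) hr

end SpectralSequenceHom

theorem spectral_sequence_comparison_above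
    {k : Type*} [Field k] {s p : ℤ} (hs : 1 ≤ s)
    (E E'' : SpectralSequence.{u} k s) (ψ : SpectralSequenceHom E E'')
    (hiso : ∀ m q : ℤ, p < m → Function.Bijective (ψ.φ s m q))
    (hzero : ∀ m q : ℤ, m ≤ p → ∀ x : E''.E s m q, x = 0)
    (r : ℤ) (hr : s ≤ r) (m q : ℤ) (hm : p < m) :
    Function.Injective (ψ.φ r m q) ∧
    ∃ e : E''.E r m q ≃ₗ[k]
        (E.E r m q × ((i : (Finset.Ico s r : Finset ℤ)) → coimDc E p i.1 m q)),
      ∀ x : E.E r m q, e (ψ.φ r m q x) = (x, 0) := by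
  have hlow : ∀ m q : ℤ, m ≤ p → Subsingleton (E''.E s m q) := fun m q hmp =>
    ⟨fun x y => (hzero m q hmp x).trans (hzero m q hmp y).symm⟩
  obtain ⟨hinj, ⟨g⟩⟩ := ψ.cokernelIsCoimAbove (by omega) hiso hlow hr m q hm
  exact ⟨hinj, LinearMap.exists_linearEquiv_prod_of_injective hinj g⟩
end
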